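/- arXiv:1511.05378 — 2 statements merged into one kernel-verified Lean document; each statement's English description precedes it below -/
import Mathlib

section
/- Let H be a Hilbert space, A: D(A) ⊆ H → H selfadjoint and non-negative, and B: D(B) ⊆ H → H linear with D(A) ⊆ D(B) such that both B and B* are A-bounded with A-bound less than 1. Assume there exists c > 0 with Re⟨Bφ, φ⟩ ≥ c‖φ‖² and Re⟨B*φ, φ⟩ ≥ c‖φ‖² for all φ ∈ D(A). Then A + B (with domain D(A)) is bijective onto H with bounded inverse satisfying ‖(A+B)^{-1}‖ ≤ 1/c. -/
/-!
A self-adjoint non-negative `A` makes `A + μ` onto for every `μ > 0`: its range is closed since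
`‖(A + μ) x‖ ≥ μ ‖x‖` and `A` is closed, and dense since a vector orthogonal to it lies in
`D(A*) = D(A)` and is an eigenvector with eigenvalue `-μ`.

Surjectivity then survives two perturbations, each by the Banach fixed point theorem in the form
"if `S` is onto and `‖P x‖ ≤ r ‖S x‖` with `r < 1`, then `S + P` is onto". First `S = A + μ`,
`P = B` for large `μ`, where `‖B x‖ ≤ a ‖A x‖ + C ‖x‖ ≤ (a + C / μ) ‖(A + μ) x‖`. Then
`S = A + B + μ`, `P = -μ`, where coercivity gives `‖(A + B + μ) x‖ ≥ (c + μ) ‖x‖`. Coercivity at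
`μ = 0` gives injectivity and the bound `1 / c`.
-/

open scoped InnerProductSpace NNReal

theorem AddMonoidHom.surjective_add_of_norm_le {D H : Type*} [AddCommGroup D]
    [NormedAddCommGroup H] [CompleteSpace H] {S P : D →+ H} (hS : Function.Surjective S)
    {r : ℝ} (hr : r < 1) (hP : ∀ x, ‖P x‖ ≤ r * ‖S x‖) : Function.Surjective (S + P) := by
  intro y
  let R := Function.surjInv hS
  have hR : ∀ u, S (R u) = u := Function.surjInv_eq hS
  let F : H → H := fun u => y - P (R u)
  have hF : ContractingWith r.toNNReal F := by
    refine ⟨Real.toNNReal_lt_one.mpr hr, LipschitzWith.of_dist_le' fun u v => ?_⟩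
    calc dist (F u) (F v) = ‖P (R v - R u)‖ := by
          rw [dist_eq_norm, map_sub, sub_sub_sub_cancel_left]
      _ ≤ r * ‖S (R v - R u)‖ := hP _
      _ = r * dist u v := by rw [map_sub, hR, hR, dist_comm, dist_eq_norm]
  obtain ⟨z, hz, -⟩ := hF.exists_fixedPoint 0 (edist_ne_top _ _)
  refine ⟨R z, ?_⟩
  have hz' : z + P (R z) = y := (sub_eq_iff_eq_add.mp hz).symm
  rw [AddMonoidHom.add_apply, hR, hz']

section InnerProduct

variable {𝕜 H : Type*} [RCLike 𝕜] [NormedAddCommGroup H] [InnerProductSpace 𝕜 H]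

theorem mul_norm_le_norm_of_mul_sq_le_re_inner {x y : H} {c : ℝ}
    (h : c * ‖x‖ ^ 2 ≤ RCLike.re ⟪y, x⟫_𝕜) : c * ‖x‖ ≤ ‖y‖ := by
  rcases (norm_nonneg x).eq_or_lt with hx | hx
  · rw [← hx, mul_zero]; exact norm_nonneg y
  · refine le_of_mul_le_mul_right ?_ hx
    calc c * ‖x‖ * ‖x‖ = c * ‖x‖ ^ 2 := by ring
      _ ≤ RCLike.re ⟪y, x⟫_𝕜 := h
      _ ≤ ‖y‖ * ‖x‖ := re_inner_le_norm y x

theorem re_inner_add_ofReal_smul_self (x y : H) (μ : ℝ) :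
    RCLike.re ⟪y + (μ : 𝕜) • x, x⟫_𝕜 = RCLike.re ⟪y, x⟫_𝕜 + μ * ‖x‖ ^ 2 := by
  rw [inner_add_left, map_add, inner_smul_left, RCLike.conj_ofReal, RCLike.re_ofReal_mul,
    inner_self_eq_norm_sq]

theorem add_mul_norm_le_norm_add_ofReal_smul {x y : H} {c : ℝ}
    (h : c * ‖x‖ ^ 2 ≤ RCLike.re ⟪y, x⟫_𝕜) (μ : ℝ) : (c + μ) * ‖x‖ ≤ ‖y + (μ : 𝕜) • x‖ := by
  refine mul_norm_le_norm_of_mul_sq_le_re_inner (𝕜 := 𝕜) ?_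
  rw [re_inner_add_ofReal_smul_self]
  linarith

theorem mul_norm_le_norm_add_ofReal_smul {x y : H} (h : 0 ≤ RCLike.re ⟪y, x⟫_𝕜) (μ : ℝ) :
    μ * ‖x‖ ≤ ‖y + (μ : 𝕜) • x‖ := by
  simpa using add_mul_norm_le_norm_add_ofReal_smul (c := 0) (by simpa using h) μ

theorem norm_le_norm_add_ofReal_smul {x y : H} (h : 0 ≤ RCLike.re ⟪y, x⟫_𝕜) {μ : ℝ}
    (hμ : 0 ≤ μ) : ‖y‖ ≤ ‖y + (μ : 𝕜) • x‖ := by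
  have key : ‖y + (μ : 𝕜) • x‖ ^ 2 = ‖y‖ ^ 2 + 2 * μ * RCLike.re ⟪y, x⟫_𝕜 + μ ^ 2 * ‖x‖ ^ 2 := by
    rw [@norm_add_sq 𝕜, inner_smul_right, norm_smul, RCLike.re_ofReal_mul, RCLike.norm_ofReal,
      abs_of_nonneg hμ]
    ring
  refine le_of_sq_le_sq ?_ (norm_nonneg _)
  rw [key]
  nlinarith [mul_nonneg hμ h, sq_nonneg (μ * ‖x‖)]

end InnerProduct

theorem LinearPMap.IsClosed.isClosed_range_add_smul {𝕜 E : Type*} [NontriviallyNormedField 𝕜]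
    [NormedAddCommGroup E] [NormedSpace 𝕜 E] [CompleteSpace E] {T : E →ₗ.[𝕜] E}
    (hT : T.IsClosed) (μ : 𝕜) {K : ℝ≥0} (hK : ∀ x : T.domain, ‖(x : E)‖ ≤ K * ‖T x + μ • (x : E)‖) :
    _root_.IsClosed (Set.range fun x : T.domain => T x + μ • (x : E)) := by
  have : CompleteSpace T.graph := hT.completeSpace_coe
  let Φ : T.graph →L[𝕜] E :=
    (ContinuousLinearMap.snd 𝕜 E E + μ • ContinuousLinearMap.fst 𝕜 E E).comp T.graph.subtypeL
  have hbound : ∀ p, ‖p‖ ≤ max K (1 + ‖μ‖₊ * K) * ‖Φ p‖ := by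
    rintro ⟨p, hp⟩
    obtain ⟨x, rfl⟩ := (T.mem_graph_iff').mp hp
    set y := T x + μ • (x : E)
    have hTx : ‖T x‖ ≤ (1 + ‖μ‖ * K) * ‖y‖ :=
      calc ‖T x‖ = ‖y - μ • (x : E)‖ := by rw [add_sub_cancel_right]
        _ ≤ ‖y‖ + ‖μ‖ * ‖(x : E)‖ := by rw [← norm_smul]; exact norm_sub_le _ _
        _ ≤ ‖y‖ + ‖μ‖ * (K * ‖y‖) := by gcongr; exact hK x
        _ = (1 + ‖μ‖ * K) * ‖y‖ := by ring
    change max ‖(x : E)‖ ‖T x‖ ≤ _ * ‖y‖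
    push_cast
    rw [max_mul_of_nonneg _ _ (norm_nonneg y)]
    exact max_le_max (hK x) hTx
  have hrange : Set.range Φ = Set.range fun x : T.domain => T x + μ • (x : E) := by
    ext y
    constructor
    · rintro ⟨⟨p, hp⟩, rfl⟩
      obtain ⟨x, rfl⟩ := (T.mem_graph_iff').mp hp
      exact ⟨x, rfl⟩
    · rintro ⟨x, rfl⟩
      exact ⟨⟨_, T.mem_graph x⟩, rfl⟩
  rw [← hrange]
  exact (Φ.antilipschitz_of_bound hbound).isClosed_range Φ.uniformContinuous

section SelfAdjoint

variable {𝕜 H : Type*} [RCLike 𝕜] [NormedAddCommGroup H] [InnerProductSpace 𝕜 H]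
  [CompleteSpace H] {A : H →ₗ.[𝕜] H}

theorem IsSelfAdjoint.eq_zero_of_inner_add_ofReal_smul_eq_zero (hA : IsSelfAdjoint A)
    (hpos : ∀ x : A.domain, 0 ≤ RCLike.re ⟪A x, x⟫_𝕜) {μ : ℝ} (hμ : 0 < μ) {w : H}
    (hw : ∀ x : A.domain, ⟪A x + (μ : 𝕜) • (x : H), w⟫_𝕜 = 0) : w = 0 := by
  have hadj : ∀ x : A.domain, ⟪((-μ : ℝ) : 𝕜) • w, x⟫_𝕜 = ⟪w, A x⟫_𝕜 := fun x => by
    have h := inner_eq_zero_symm.mp (hw x)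
    rw [inner_add_right, inner_smul_right] at h
    rw [inner_smul_left, RCLike.conj_ofReal, RCLike.ofReal_neg]
    linear_combination -h
  have hmem : w ∈ A.adjoint.domain := LinearPMap.mem_adjoint_domain_of_exists w ⟨_, hadj⟩
  have hAw : A.adjoint ⟨w, hmem⟩ = ((-μ : ℝ) : 𝕜) • w :=
    LinearPMap.adjoint_apply_eq hA.dense_domain ⟨w, hmem⟩ hadj
  rw [← LinearPMap.isSelfAdjoint_def.mp hA] at hpos
  have h := hpos ⟨w, hmem⟩
  rw [hAw, inner_smul_left, RCLike.conj_ofReal, RCLike.re_ofReal_mul, inner_self_eq_norm_sq] at h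
  have : ‖w‖ ^ 2 ≤ 0 := by nlinarith
  simpa using this

theorem IsSelfAdjoint.surjective_add_ofReal_smul (hA : IsSelfAdjoint A)
    (hpos : ∀ x : A.domain, 0 ≤ RCLike.re ⟪A x, x⟫_𝕜) {μ : ℝ} (hμ : 0 < μ) :
    Function.Surjective fun x : A.domain => A x + (μ : 𝕜) • (x : H) := by
  let f : A.domain →ₗ[𝕜] H := A.toFun + (μ : 𝕜) • A.domain.subtype
  have hbound : ∀ x : A.domain, ‖(x : H)‖ ≤ (⟨μ⁻¹, by positivity⟩ : ℝ≥0) * ‖f x‖ := fun x => by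
    change ‖(x : H)‖ ≤ μ⁻¹ * ‖f x‖
    rw [inv_mul_eq_div, le_div_iff₀ hμ, mul_comm]
    exact mul_norm_le_norm_add_ofReal_smul (hpos x) μ
  have hclosed : IsClosed (LinearMap.range f : Set H) := by
    rw [LinearMap.coe_range]
    exact hA.isClosed.isClosed_range_add_smul (μ : 𝕜) hbound
  have hcompl : (LinearMap.range f)ᗮ = ⊥ := by
    refine (Submodule.eq_bot_iff _).mpr fun w hw => ?_
    exact hA.eq_zero_of_inner_add_ofReal_smul_eq_zero hpos hμ fun x =>
      Submodule.inner_right_of_mem_orthogonal (LinearMap.mem_range_self f x) hw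
  have : CompleteSpace (LinearMap.range f) := hclosed.completeSpace_coe
  exact LinearMap.range_eq_top.mp (Submodule.orthogonal_eq_bot_iff.mp hcompl)

theorem IsSelfAdjoint.exists_surjective_add_add_ofReal_smul (hA : IsSelfAdjoint A)
    (hpos : ∀ x : A.domain, 0 ≤ RCLike.re ⟪A x, x⟫_𝕜) (P : A.domain →ₗ[𝕜] H) {a C : ℝ}
    (ha0 : 0 ≤ a) (ha : a < 1) (hC : 0 ≤ C) (hP : ∀ x, ‖P x‖ ≤ a * ‖A x‖ + C * ‖(x : H)‖) :
    ∃ μ : ℝ, 0 < μ ∧ Function.Surjective fun x : A.domain => A x + P x + (μ : 𝕜) • (x : H) := by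
  set μ := (C + 1) / (1 - a)
  have ha' : 0 < 1 - a := by linarith
  have hμ : 0 < μ := by positivity
  have hCμ : C / μ < 1 - a := by
    rw [div_lt_iff₀ hμ, mul_div_cancel₀ _ ha'.ne']
    linarith
  let S : A.domain →+ H := (A.toFun + (μ : 𝕜) • A.domain.subtype).toAddMonoidHom
  have hS : Function.Surjective S := hA.surjective_add_ofReal_smul hpos hμ
  have hPS : ∀ x, ‖P x‖ ≤ (a + C / μ) * ‖S x‖ := fun x => by
    have h1 : ‖A x‖ ≤ ‖S x‖ := norm_le_norm_add_ofReal_smul (hpos x) hμ.le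
    have h2 : μ * ‖(x : H)‖ ≤ ‖S x‖ := mul_norm_le_norm_add_ofReal_smul (hpos x) μ
    calc ‖P x‖ ≤ a * ‖A x‖ + C / μ * (μ * ‖(x : H)‖) := by
          rw [← mul_assoc, div_mul_cancel₀ C hμ.ne']; exact hP x
      _ ≤ (a + C / μ) * ‖S x‖ := by
          rw [add_mul]; gcongr
  refine ⟨μ, hμ, fun y => ?_⟩
  obtain ⟨x, hx⟩ :=
    AddMonoidHom.surjective_add_of_norm_le (P := P.toAddMonoidHom) hS (by linarith) hPS y
  exact ⟨x, (add_right_comm _ _ _).trans hx⟩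

end SelfAdjoint

theorem LinearMap.surjective_of_surjective_add_ofReal_smul {𝕜 H : Type*} [RCLike 𝕜]
    [NormedAddCommGroup H] [InnerProductSpace 𝕜 H] [CompleteSpace H] {D : Submodule 𝕜 H}
    (T : D →ₗ[𝕜] H) {c : ℝ} (hc : 0 < c)
    (hT : ∀ x : D, c * ‖(x : H)‖ ^ 2 ≤ RCLike.re ⟪T x, x⟫_𝕜) {μ : ℝ} (hμ : 0 ≤ μ)
    (hsurj : Function.Surjective fun x : D => T x + (μ : 𝕜) • (x : H)) :
    Function.Surjective T := by
  let S : D →+ H := (T + (μ : 𝕜) • D.subtype).toAddMonoidHom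
  let P : D →+ H := (-(μ : 𝕜) • D.subtype).toAddMonoidHom
  have hPS : ∀ x, ‖P x‖ ≤ μ / (c + μ) * ‖S x‖ := fun x => by
    have h := add_mul_norm_le_norm_add_ofReal_smul (hT x) μ
    calc ‖P x‖ = μ / (c + μ) * ((c + μ) * ‖(x : H)‖) := by
          rw [← mul_assoc, div_mul_cancel₀ μ (by positivity)]
          simp [P, norm_smul, abs_of_nonneg hμ]
      _ ≤ μ / (c + μ) * ‖S x‖ := by gcongr; exact h
  have hST : ⇑(S + P) = ⇑T := funext fun x => by simp [S, P]
  rw [← hST]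
  exact AddMonoidHom.surjective_add_of_norm_le hsurj
    ((div_lt_one (by positivity)).mpr (by linarith)) hPS

open scoped ComplexInnerProductSpace in
theorem stmt4_general
    {H : Type*} [NormedAddCommGroup H] [InnerProductSpace ℂ H] [CompleteSpace H]
    (A B : H →ₗ.[ℂ] H)
    (hA : A.adjoint = A)
    (hApos : ∀ φ : A.domain, 0 ≤ (⟪A φ, (φ : H)⟫).re)
    (hdomB : A.domain ≤ B.domain)
    (κ : ℝ) (hκ : κ < 1)
    (hBbound : ∀ κ' > κ, ∃ C > 0, ∀ φ : A.domain,
      ‖B ⟨(φ : H), hdomB φ.2⟩‖ ≤ κ' * ‖A φ‖ + C * ‖(φ : H)‖)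
    (c : ℝ) (hc : 0 < c)
    (hBcoer : ∀ φ : A.domain,
      c * ‖(φ : H)‖ ^ 2 ≤ (⟪B ⟨(φ : H), hdomB φ.2⟩, (φ : H)⟫).re) :
    (∀ y : H, ∃! φ : A.domain, A φ + B ⟨(φ : H), hdomB φ.2⟩ = y) ∧
    (∀ (y : H) (φ : A.domain), A φ + B ⟨(φ : H), hdomB φ.2⟩ = y →
      ‖(φ : H)‖ ≤ (1 / c) * ‖y‖) := by
  let P : A.domain →ₗ[ℂ] H := B.toFun ∘ₗ Submodule.inclusion hdomB
  let T : A.domain →ₗ[ℂ] H := A.toFun + P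
  obtain ⟨C, hC, hP⟩ := hBbound ((max κ 0 + 1) / 2) (by linarith [le_max_left κ 0])
  obtain ⟨μ, hμ, hsurjμ⟩ := IsSelfAdjoint.exists_surjective_add_add_ofReal_smul hA hApos P
    (by positivity) (by linarith [max_lt hκ zero_lt_one]) hC.le hP
  have hTcoer : ∀ φ : A.domain, c * ‖(φ : H)‖ ^ 2 ≤ RCLike.re ⟪T φ, (φ : H)⟫ := fun φ =>
    calc c * ‖(φ : H)‖ ^ 2 ≤ (⟪A φ, (φ : H)⟫).re + (⟪B ⟨φ, hdomB φ.2⟩, (φ : H)⟫).re := by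
          linarith [hApos φ, hBcoer φ]
      _ = RCLike.re ⟪T φ, (φ : H)⟫ := by rw [← Complex.add_re, ← inner_add_left]; rfl
  have hsurj : Function.Surjective T :=
    T.surjective_of_surjective_add_ofReal_smul hc hTcoer hμ.le hsurjμ
  have hbound : ∀ φ : A.domain, ‖(φ : H)‖ ≤ 1 / c * ‖T φ‖ := fun φ => by
    rw [one_div_mul_eq_div, le_div_iff₀ hc, mul_comm]
    exact mul_norm_le_norm_of_mul_sq_le_re_inner (hTcoer φ)
  have hinj : Function.Injective T := (injective_iff_map_eq_zero T).mpr fun φ hφ => by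
    simpa [hφ] using hbound φ
  refine ⟨fun y => ?_, fun y φ hφ => hφ ▸ hbound φ⟩
  obtain ⟨φ, hφ⟩ := hsurj y
  exact ⟨φ, hφ, fun ψ hψ => hinj (hψ.trans hφ.symm)⟩

open scoped ComplexInnerProductSpace in
/-- Let `A` be selfadjoint and non-negative, and let `B` be such that
`B` and `B*` are `A`-bounded with `A`-bound `< 1` and satisfy
`Re⟨Bφ,φ⟩ ≥ c‖φ‖²`, `Re⟨B*φ,φ⟩ ≥ c‖φ‖²` on `D(A)` for some `c > 0`. Then `A + B`
(with domain `D(A)`) is a bijection onto `H` whose inverse is bounded by `1/c`. -/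
theorem stmt4
    {H : Type*} [NormedAddCommGroup H] [InnerProductSpace ℂ H] [CompleteSpace H]
    (A B : H →ₗ.[ℂ] H)
    (hA : A.adjoint = A)
    (hApos : ∀ φ : A.domain, 0 ≤ (⟪A φ, (φ : H)⟫).re)
    (hdomB : A.domain ≤ B.domain)
    (hdomB' : A.domain ≤ B.adjoint.domain)
    (κ : ℝ) (hκ0 : 0 ≤ κ) (hκ : κ < 1)
    (hBbound : ∀ κ' > κ, ∃ C > 0, ∀ φ : A.domain,
      ‖B ⟨(φ : H), hdomB φ.2⟩‖ ≤ κ' * ‖A φ‖ + C * ‖(φ : H)‖)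
    (hBstarbound : ∀ κ' > κ, ∃ C > 0, ∀ φ : A.domain,
      ‖B.adjoint ⟨(φ : H), hdomB' φ.2⟩‖ ≤ κ' * ‖A φ‖ + C * ‖(φ : H)‖)
    (c : ℝ) (hc : 0 < c)
    (hBcoer : ∀ φ : A.domain,
      c * ‖(φ : H)‖ ^ 2 ≤ (⟪B ⟨(φ : H), hdomB φ.2⟩, (φ : H)⟫).re)
    (hBstarcoer : ∀ φ : A.domain,
      c * ‖(φ : H)‖ ^ 2 ≤ (⟪B.adjoint ⟨(φ : H), hdomB' φ.2⟩, (φ : H)⟫).re) :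
    (∀ y : H, ∃! φ : A.domain, A φ + B ⟨(φ : H), hdomB φ.2⟩ = y) ∧
    (∀ (y : H) (φ : A.domain), A φ + B ⟨(φ : H), hdomB φ.2⟩ = y →
      ‖(φ : H)‖ ≤ (1 / c) * ‖y‖) :=
  stmt4_general A B hA hApos hdomB κ hκ hBbound c hc hBcoer
end

section
/- Let Ω = (0,1)ⁿ and let grad_c denote the gradient defined on C_c^∞(Ω) as an operator from L²(Ω) to L²(Ω)ⁿ, with closure the minimal gradient (whose domain is H¹₀(Ω)), and let div̊ denote the closure of the divergence on C_c^∞(Ω)ⁿ. Then the composition div̊ ∘ grad̊ is a closed operator in L²(Ω). -/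
/-! From the duality, `‖G u‖² = -⟪u, D (G u)⟫ ≤ ‖u‖ ‖D (G u)‖`. Applied to differences along a
sequence `uₙ → x` with `D (G uₙ) → y`, this makes `G uₙ` Cauchy, hence convergent to some `k`;
closedness of `G` gives `G x = k`, and closedness of `D` then gives `D k = y`. -/

open Filter Topology
open scoped RealInnerProductSpace

theorem cauchySeq_of_dist_sq_le_mul {α β γ : Type*} [PseudoMetricSpace α] [PseudoMetricSpace β]
    [PseudoMetricSpace γ] {a : ℕ → α} {b : ℕ → β} {c : ℕ → γ} (ha : CauchySeq a)
    (hb : CauchySeq b) (h : ∀ n m, dist (c n) (c m) ^ 2 ≤ dist (a n) (a m) * dist (b n) (b m)) :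
    CauchySeq c := by
  rw [cauchySeq_iff_tendsto_dist_atTop_0] at ha hb ⊢
  have hsqrt : Tendsto (fun p : ℕ × ℕ => √(dist (a p.1) (a p.2) * dist (b p.1) (b p.2)))
      atTop (𝓝 0) := by
    simpa using (ha.mul hb).sqrt
  refine squeeze_zero (fun _ => dist_nonneg) (fun p => ?_) hsqrt
  exact Real.le_sqrt_of_sq_le (h p.1 p.2)

theorem LinearPMap.IsClosed.exists_apply_eq_of_tendsto {R E F ι : Type*} [CommRing R]
    [AddCommGroup E] [AddCommGroup F] [Module R E] [Module R F] [TopologicalSpace E]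
    [TopologicalSpace F] {f : E →ₗ.[R] F} (hf : f.IsClosed) {l : Filter ι} [l.NeBot]
    {x : ι → f.domain} {a : E} {b : F} (hx : Tendsto (fun i => (x i : E)) l (𝓝 a))
    (hfx : Tendsto (fun i => f (x i)) l (𝓝 b)) : ∃ ha : a ∈ f.domain, f ⟨a, ha⟩ = b := by
  have hab : (a, b) ∈ f.graph :=
    hf.mem_of_tendsto (hx.prodMk_nhds hfx) (Eventually.of_forall fun i => f.mem_graph (x i))
  exact ⟨LinearPMap.mem_domain_of_mem_graph hab, ((LinearPMap.image_iff _).2 hab).symm⟩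

section Duality

variable {H K : Type*} [NormedAddCommGroup H] [InnerProductSpace ℝ H]
  [NormedAddCommGroup K] [InnerProductSpace ℝ K] {G : H →ₗ.[ℝ] K} {D : K →ₗ.[ℝ] H}

theorem norm_sq_eq_neg_inner_of_duality
    (hduality : ∀ (u : G.domain) (v : D.domain), ⟪G u, (v : K)⟫ = -⟪(u : H), D v⟫)
    {u : G.domain} {v : D.domain} (hv : (v : K) = G u) : ‖G u‖ ^ 2 = -⟪(u : H), D v⟫ := by
  rw [← hduality u v, hv, real_inner_self_eq_norm_sq]

theorem norm_sq_le_mul_of_duality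
    (hduality : ∀ (u : G.domain) (v : D.domain), ⟪G u, (v : K)⟫ = -⟪(u : H), D v⟫)
    {u : G.domain} {v : D.domain} (hv : (v : K) = G u) : ‖G u‖ ^ 2 ≤ ‖(u : H)‖ * ‖D v‖ := by
  rw [norm_sq_eq_neg_inner_of_duality hduality hv]
  exact (neg_le_abs _).trans (abs_real_inner_le_norm _ _)

theorem cauchySeq_apply_of_duality
    (hduality : ∀ (u : G.domain) (v : D.domain), ⟪G u, (v : K)⟫ = -⟪(u : H), D v⟫)
    {u : ℕ → G.domain} {v : ℕ → D.domain} (hv : ∀ n, (v n : K) = G (u n))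
    (hu : CauchySeq fun n => (u n : H)) (hDv : CauchySeq fun n => D (v n)) :
    CauchySeq fun n => G (u n) := by
  refine cauchySeq_of_dist_sq_le_mul hu hDv fun n m => ?_
  have hvsub : ((v n - v m : D.domain) : K) = G (u n - u m) := by
    simp only [Submodule.coe_sub, hv, LinearPMap.map_sub]
  simpa only [dist_eq_norm, LinearPMap.map_sub, Submodule.coe_sub] using
    norm_sq_le_mul_of_duality hduality hvsub

end Duality

theorem stmt7_general
    {H K : Type*} [NormedAddCommGroup H] [InnerProductSpace ℝ H]
    [NormedAddCommGroup K] [InnerProductSpace ℝ K] [CompleteSpace K]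
    (G : H →ₗ.[ℝ] K) (D : K →ₗ.[ℝ] H)
    (hG : G.IsClosed) (hD : D.IsClosed)
    (hduality : ∀ (u : G.domain) (v : D.domain), ⟪G u, (v : K)⟫ = -⟪(u : H), D v⟫) :
    IsClosed {p : H × H |
      ∃ (hu : p.1 ∈ G.domain) (hv : G ⟨p.1, hu⟩ ∈ D.domain),
        D ⟨G ⟨p.1, hu⟩, hv⟩ = p.2} := by
  rw [← isSeqClosed_iff_isClosed]
  rintro f ⟨x, y⟩ hf hlim
  choose hu hv hDGu using hf
  have hx : Tendsto (fun n => (f n).1) atTop (𝓝 x) := (continuous_fst.tendsto _).comp hlim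
  have hDGx : Tendsto (fun n => D ⟨G ⟨(f n).1, hu n⟩, hv n⟩) atTop (𝓝 y) :=
    ((continuous_snd.tendsto _).comp hlim).congr fun n => (hDGu n).symm
  obtain ⟨k, hk⟩ := cauchySeq_tendsto_of_complete <|
    cauchySeq_apply_of_duality hduality (u := fun n => ⟨(f n).1, hu n⟩) (fun n => rfl)
      hx.cauchySeq hDGx.cauchySeq
  obtain ⟨hxG, rfl⟩ := hG.exists_apply_eq_of_tendsto hx hk
  obtain ⟨hkD, hDk⟩ := hD.exists_apply_eq_of_tendsto hk hDGx
  exact ⟨hxG, hkD, hDk⟩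

open scoped RealInnerProductSpace in
/-- Abstract formulation of: on `Ω = (0,1)ⁿ`, the composition
`div̊ ∘ grad̊` of the minimal divergence with the minimal gradient is a closed operator
in `L²(Ω)`. Here `H` plays the role of `L²(Ω)`, `K` the role of `L²(Ω)ⁿ`, `G` the minimal
gradient `grad̊` (a closed densely defined operator, domain `H¹₀(Ω)`) and `D` the minimal
divergence `div̊` (closed), and the integration-by-parts duality
`⟪Gu, v⟫ = -⟪u, Dv⟫` (coming from `grad̊ ⊆ -div*` and `div̊ ⊆ -grad*`) is assumed.
The conclusion is that the graph of the composition `D ∘ G` is closed. -/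
theorem stmt7
    {H K : Type*} [NormedAddCommGroup H] [InnerProductSpace ℝ H] [CompleteSpace H]
    [NormedAddCommGroup K] [InnerProductSpace ℝ K] [CompleteSpace K]
    (G : H →ₗ.[ℝ] K) (D : K →ₗ.[ℝ] H)
    (hG : G.IsClosed) (hD : D.IsClosed)
    (hGdense : Dense (G.domain : Set H))
    (hduality : ∀ (u : G.domain) (v : D.domain), ⟪G u, (v : K)⟫ = -⟪(u : H), D v⟫) :
    IsClosed {p : H × H |
      ∃ (hu : p.1 ∈ G.domain) (hv : G ⟨p.1, hu⟩ ∈ D.domain),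
        D ⟨G ⟨p.1, hu⟩, hv⟩ = p.2} :=
  stmt7_general G D hG hD hduality
end
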